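/- arXiv:1806.01636 — 2 statements merged into one kernel-verified Lean document; each statement's English description precedes it below -/
import Mathlib

section
/- The quotient ℛ/≡ of the natural real numbers with the quotient topology induced by 𝒯_ℝ# is homeomorphic to ℝ with its usual metric topology; a homeomorphism is induced by the map ρ sending a natural real to the unique real number it represents. -/
/-! # Natural Topology: basic framework (Waaldijk) -/

/-- A pre-natural space: a countable set of basic dots with a decidable
pre-apartness `apart` and a decidable refinement partial order `refines`. -/
structure PreNaturalSpace (V : Type) : Type where
  countable' : Countable V
  apart : V → V → Prop
  refines : V → V → Prop
  apart_dec : DecidableRel apart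
  refines_dec : DecidableRel refines
  apart_symm : ∀ a b, apart a b → apart b a
  apart_irrefl : ∀ a, ¬ apart a a
  apart_mono : ∀ a b c, refines a b → apart c b → apart c a
  refines_refl : ∀ a, refines a a
  refines_trans : ∀ a b c, refines a b → refines b c → refines a c
  refines_antisymm : ∀ a b, refines a b → refines b a → a = b

namespace PreNaturalSpace

variable {V W : Type}

/-- `a ≺ b` : strict refinement. -/
def strict (P : PreNaturalSpace V) (a b : V) : Prop := P.refines a b ∧ a ≠ b

/-- A point is a shrinking sequence of dots deciding every apart pair of dots. -/
structure IsPoint (P : PreNaturalSpace V) (p : ℕ → V) : Prop where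
  mono : ∀ n, P.refines (p (n + 1)) (p n)
  shrink : ∀ n, ∃ m, P.strict (p m) (p n)
  decides : ∀ a b, P.apart a b → ∃ m, P.apart (p m) a ∨ P.apart (p m) b

/-- The set of points of a pre-natural space. -/
def Pt (P : PreNaturalSpace V) : Type := { p : ℕ → V // P.IsPoint p }

/-- `p` begins with the dot `a` : some `p m ≺ a`. -/
def begins (P : PreNaturalSpace V) (p : ℕ → V) (a : V) : Prop := ∃ m, P.strict (p m) a

/-- Apartness between a dot and a point. -/
def dApart (P : PreNaturalSpace V) (a : V) (p : ℕ → V) : Prop := ∃ m, P.apart (p m) a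

/-- Apartness between points. -/
def pApart (P : PreNaturalSpace V) (p q : P.Pt) : Prop := ∃ n, P.apart (p.1 n) (q.1 n)

/-- Equivalence of points: the negation of apartness. -/
def pEquiv (P : PreNaturalSpace V) (p q : P.Pt) : Prop := ¬ P.pApart p q

variable (P : PreNaturalSpace V)

lemma refines_of_le {p : ℕ → V} (hp : ∀ n, P.refines (p (n + 1)) (p n)) :
    ∀ {m k : ℕ}, m ≤ k → P.refines (p k) (p m) := by
  intro m k h
  induction h with
  | refl => exact P.refines_refl _
  | step h ih => exact P.refines_trans _ _ _ (hp _) ih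

lemma begins_mono {z : ℕ → V} (hz : P.IsPoint z) {a b : V} (hab : P.refines a b)
    (h : P.begins z a) : P.begins z b := by
  obtain ⟨j, hj1, hj2⟩ := h
  have hzb : P.refines (z j) b := P.refines_trans _ _ _ hj1 hab
  by_cases he : z j = b
  · obtain ⟨i, hi1, hi2⟩ := hz.shrink j
    exact ⟨i, P.refines_trans _ _ _ hi1 hzb, fun h' => hi2 (h'.trans he.symm)⟩
  · exact ⟨j, hzb, he⟩

/-- The natural (apartness) topology as a predicate on subsets of the point set. -/
def NatOpen (U : Set P.Pt) : Prop :=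
  ∀ x ∈ U, ∀ y : P.Pt, P.pApart y x ∨ ∃ m, { z : P.Pt | P.begins z.1 (y.1 m) } ⊆ U

instance instTopPt : TopologicalSpace P.Pt where
  IsOpen := P.NatOpen
  isOpen_univ := fun _ _ _ => Or.inr ⟨0, fun _ _ => trivial⟩
  isOpen_inter := by
    intro U U' hU hU' x hx y
    rcases hU x hx.1 y with h | ⟨m, hm⟩
    · exact Or.inl h
    rcases hU' x hx.2 y with h | ⟨k, hk⟩
    · exact Or.inl h
    refine Or.inr ⟨max m k, fun z hz => ⟨hm ?_, hk ?_⟩⟩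
    · exact P.begins_mono z.2 (P.refines_of_le y.2.mono (le_max_left m k)) hz
    · exact P.begins_mono z.2 (P.refines_of_le y.2.mono (le_max_right m k)) hz
  isOpen_sUnion := by
    intro S hS x hx y
    obtain ⟨U, hU, hxU⟩ := hx
    rcases hS U hU x hxU y with h | ⟨m, hm⟩
    · exact Or.inl h
    · exact Or.inr ⟨m, fun z hz => ⟨U, hU, hm hz⟩⟩

lemma pEquiv_refl (p : P.Pt) : P.pEquiv p p := fun ⟨_, h⟩ => P.apart_irrefl _ h

lemma pEquiv_symm {p q : P.Pt} (h : P.pEquiv p q) : P.pEquiv q p :=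
  fun ⟨n, hn⟩ => h ⟨n, P.apart_symm _ _ hn⟩

lemma pEquiv_trans {p q r : P.Pt} (hpq : P.pEquiv p q) (hqr : P.pEquiv q r) :
    P.pEquiv p r := by
  rintro ⟨n, hn⟩
  obtain ⟨m, hm⟩ := q.2.decides (p.1 n) (r.1 n) hn
  rcases hm with hm | hm
  · -- q.1 m apart from p.1 n
    refine hpq ⟨max m n, ?_⟩
    have h1 : P.apart (p.1 n) (q.1 (max m n)) :=
      P.apart_mono _ _ _ (P.refines_of_le q.2.mono (le_max_left m n)) (P.apart_symm _ _ hm)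
    have h2 : P.apart (q.1 (max m n)) (p.1 (max m n)) :=
      P.apart_mono _ _ _ (P.refines_of_le p.2.mono (le_max_right m n)) (P.apart_symm _ _ h1)
    exact P.apart_symm _ _ h2
  · refine hqr ⟨max m n, ?_⟩
    have h1 : P.apart (r.1 n) (q.1 (max m n)) :=
      P.apart_mono _ _ _ (P.refines_of_le q.2.mono (le_max_left m n)) (P.apart_symm _ _ hm)
    exact P.apart_mono _ _ _ (P.refines_of_le r.2.mono (le_max_right m n))
      (P.apart_symm _ _ h1)

/-- The setoid of points modulo `≡`. -/
def ptSetoid : Setoid P.Pt :=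
  ⟨P.pEquiv, ⟨P.pEquiv_refl, P.pEquiv_symm, P.pEquiv_trans⟩⟩

/-- `â` : the set of points beginning with the dot `a`. -/
def hatSet (a : V) : Set P.Pt := { p | P.begins p.1 a }

/-- `ā` : the `≡`-closure of `â`. -/
def barSet (a : V) : Set P.Pt := { p | ∃ q : P.Pt, P.begins q.1 a ∧ P.pEquiv p q }

/-- A natural space is basic-open when every `ā` is open. -/
def BasicOpen : Prop := ∀ a : V, IsOpen (P.barSet a)

/-- Existence of a maximal dot. -/
def HasMaxDot : Prop := ∃ m, ∀ a, P.refines a m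

/-- Every basic dot begins at least one point. -/
def AllDotsInhabited : Prop := ∀ a : V, ∃ p : ℕ → V, P.IsPoint p ∧ P.begins p a

/-- The conditions making the point set of a pre-natural space a natural space. -/
def IsNaturalSpace : Prop := P.HasMaxDot ∧ P.AllDotsInhabited

end PreNaturalSpace

/-- A refinement morphism between (pre-)natural spaces: a map on dots sending
points to points and reflecting apartness of points. -/
structure RefMorphism {V W : Type} (P : PreNaturalSpace V) (Q : PreNaturalSpace W) : Type where
  toFun : V → W
  maps_points : ∀ p : ℕ → V, P.IsPoint p → Q.IsPoint (fun n => toFun (p n))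
  reflects_apart : ∀ p q : ℕ → V, P.IsPoint p → P.IsPoint q →
    (∃ n, Q.apart (toFun (p n)) (toFun (q n))) → ∃ n, P.apart (p n) (q n)

/-- The induced map on points of a refinement morphism. -/
def RefMorphism.pointMap {V W : Type} {P : PreNaturalSpace V} {Q : PreNaturalSpace W}
    (f : RefMorphism P Q) (p : P.Pt) : Q.Pt :=
  ⟨fun n => f.toFun (p.1 n), f.maps_points p.1 p.2⟩

namespace PreNaturalSpace

variable {V W : Type} (P : PreNaturalSpace V)

/-- Restriction of a pre-natural space to a subset of dots. -/
noncomputable def restrict (S : Set V) : PreNaturalSpace S where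
  countable' := by haveI := P.countable'; exact inferInstance
  apart a b := P.apart a.1 b.1
  refines a b := P.refines a.1 b.1
  apart_dec := Classical.decRel _
  refines_dec := Classical.decRel _
  apart_symm _ _ h := P.apart_symm _ _ h
  apart_irrefl a := P.apart_irrefl a.1
  apart_mono _ _ _ h1 h2 := P.apart_mono _ _ _ h1 h2
  refines_refl a := P.refines_refl a.1
  refines_trans _ _ _ h1 h2 := P.refines_trans _ _ _ h1 h2
  refines_antisymm _ _ h1 h2 := Subtype.ext (P.refines_antisymm _ _ h1 h2)

/-! ## Trail spaces -/

/-- A `≺`-trail: a finite strictly refining sequence `a₀ ≻ a₁ ≻ …`. -/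
def Trail : Type := { l : List V // l.Chain' fun a b => P.strict b a }

lemma strict_trans_flip : Transitive (fun a b : V => P.strict b a) := by
  rintro a b c ⟨h1, h1'⟩ ⟨h2, h2'⟩
  refine ⟨P.refines_trans _ _ _ h2 h1, fun he => ?_⟩
  exact h2' (P.refines_antisymm _ _ h2 (he ▸ h1))

lemma last_refines_of_prefix {a b : List V}
    (ha : a.Chain' fun x y => P.strict y x) (hpre : b <+: a)
    {x y : V} (hx : x ∈ a.getLast?) (hy : y ∈ b.getLast?) :
    P.refines x y := by
  haveI : IsTrans V (fun x y : V => P.strict y x) := ⟨fun _ _ _ h1 h2 => P.strict_trans_flip h1 h2⟩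
  have hpw : a.Pairwise fun x y => P.strict y x := List.isChain_iff_pairwise.mp ha
  obtain ⟨t, rfl⟩ := hpre
  rcases eq_or_ne t [] with rfl | ht
  · rw [List.append_nil] at hx
    have : x = y := by
      rw [Option.mem_def] at hx hy
      exact Option.some_injective _ (hx ▸ hy ▸ rfl)
    exact this ▸ P.refines_refl x
  · rw [List.getLast?_append_of_ne_nil _ ht] at hx
    have hxt : x ∈ t := List.mem_of_mem_getLast? hx
    have hyb : y ∈ b := List.mem_of_mem_getLast? hy
    have := (List.pairwise_append.mp hpw).2.2 y hyb x hxt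
    exact this.1

/-- The trail space of a pre-natural space: dots are `≺`-trails, with
`a ⊑* b` iff `b` is an initial segment of `a`, and `a #* b` iff the last
dots of `a` and `b` are apart. -/
noncomputable def trailSpace : PreNaturalSpace P.Trail where
  countable' := by haveI := P.countable'; exact inferInstanceAs (Countable
    { l : List V // l.Chain' fun a b => P.strict b a })
  apart a b := ∃ x ∈ a.1.getLast?, ∃ y ∈ b.1.getLast?, P.apart x y
  refines a b := b.1 <+: a.1
  apart_dec := Classical.decRel _
  refines_dec := Classical.decRel _
  apart_symm := by
    rintro a b ⟨x, hx, y, hy, hxy⟩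
    exact ⟨y, hy, x, hx, P.apart_symm _ _ hxy⟩
  apart_irrefl := by
    rintro a ⟨x, hx, y, hy, hxy⟩
    rw [Option.mem_def] at hx hy
    have : x = y := Option.some_injective _ (hx ▸ hy ▸ rfl)
    exact P.apart_irrefl x (this ▸ hxy)
  apart_mono := by
    rintro a b c hab ⟨x, hx, y, hy, hxy⟩
    have hbne : b.1 ≠ [] := by
      intro h
      rw [h] at hy
      simp at hy
    have hane : a.1 ≠ [] := by
      intro h
      exact hbne (List.prefix_nil.mp (h ▸ hab))
    obtain ⟨z, hz⟩ : ∃ z, z ∈ a.1.getLast? := by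
      rcases h : a.1.getLast? with _ | z
      · exact absurd (List.getLast?_eq_none_iff.mp h) hane
      · exact ⟨z, rfl⟩
    have hzy : P.refines z y := P.last_refines_of_prefix a.2 hab hz hy
    exact ⟨x, hx, z, hz, P.apart_mono _ _ _ hzy hxy⟩
  refines_refl a := List.prefix_refl a.1
  refines_trans _ _ _ h1 h2 := h2.trans h1
  refines_antisymm a b h1 h2 :=
    Subtype.ext (h2.eq_of_length (le_antisymm h2.length_le h1.length_le))

end PreNaturalSpace

open Classical in
/-- `p♯(n)` : the `≺`-trail obtained from `p₀, …, p_{n-1}` by deleting repetitions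
(for a shrinking sequence `p`, repetitions are consecutive). -/
noncomputable def segList {V : Type} (p : ℕ → V) : ℕ → List V
  | 0 => []
  | n + 1 =>
    if (segList p n).getLast? = some (p n) then segList p n
    else segList p n ++ [p n]

namespace PreNaturalSpace

variable {V W : Type} (P : PreNaturalSpace V)

/-- The map on trail dots sending a nonempty trail to its last element and
the empty trail to `m`. -/
def lastDot (m : V) (q : P.Trail) : V := q.1.getLast?.getD m

/-- `g` is the point map induced by a trail morphism `f` (a refinement morphism
on the trail space): `g p = f (p♯(0)), f (p♯(1)), …`. -/
def InducedByTrailMorphism (Q : PreNaturalSpace W) (f : RefMorphism P.trailSpace Q)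
    (g : P.Pt → Q.Pt) : Prop :=
  ∀ p : P.Pt, ∃ t : P.trailSpace.Pt, (∀ n, (t.1 n).1 = segList p.1 n) ∧ g p = f.pointMap t

/-- `g` is a natural morphism map: induced by a refinement morphism or by a trail morphism. -/
def IsNaturalMorphismMap (Q : PreNaturalSpace W) (g : P.Pt → Q.Pt) : Prop :=
  (∃ f : RefMorphism P Q, ∀ p, g p = f.pointMap p) ∨
  (∃ f : RefMorphism P.trailSpace Q, P.InducedByTrailMorphism Q f g)

/-- Two natural spaces are isomorphic: natural morphisms both ways, inverse up to `≡`. -/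
def AreIsomorphic (Q : PreNaturalSpace W) : Prop :=
  ∃ (f : P.Pt → Q.Pt) (g : Q.Pt → P.Pt),
    P.IsNaturalMorphismMap Q f ∧ Q.IsNaturalMorphismMap P g ∧
    (∀ x, P.pEquiv (g (f x)) x) ∧ (∀ y, Q.pEquiv (f (g y)) y)

/-- A natural space is a basic neighborhood space iff it is isomorphic to a basic-open space. -/
def IsBasicNbhdSpace : Prop :=
  ∃ (W' : Type) (Q : PreNaturalSpace W'), Q.IsNaturalSpace ∧ Q.BasicOpen ∧ P.AreIsomorphic Q

/-! ## Trees, treas, spreads, spraids, fans -/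

/-- `a` is a successor of `c`. -/
def IsSucc (a c : V) : Prop := P.strict a c ∧ ∀ b, P.strict a b → P.refines b c → b = c

/-- A successor-trail (as a list, each entry a successor of the previous one). -/
def SuccChain (l : List V) : Prop := l.Chain' fun x y => P.IsSucc y x

/-- A successor-trail from `m` to `a`. -/
def IsSuccTrailFromTo (m a : V) (l : List V) : Prop :=
  P.SuccChain l ∧ l.head? = some m ∧ l.getLast? = some a

/-- `(V,⊑)` is a tree. -/
def IsTree : Prop :=
  ∃ m, (∀ a, P.refines a m) ∧ ∀ a, ∃! l : List V, P.IsSuccTrailFromTo m a l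

/-- `(V,⊑)` is a trea. -/
def IsTrea : Prop :=
  ∃ m, (∀ a, P.refines a m) ∧ (∀ a, { b | P.refines a b }.Finite) ∧
    ∀ a, ∃ g : ℕ, ∀ l : List V, P.IsSuccTrailFromTo m a l → l.length = g

/-- Every infinite successor-trail is a point. -/
def SuccTrailsArePoints : Prop :=
  ∀ q : ℕ → V, (∀ n, P.IsSucc (q (n + 1)) (q n)) → P.IsPoint q

def IsSpread : Prop := P.IsTree ∧ P.SuccTrailsArePoints

def IsSpraid : Prop := P.IsTrea ∧ P.SuccTrailsArePoints

/-- Finitely branching: every dot has finitely many successors. -/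
def FinBranching : Prop := ∀ a : V, { b | P.IsSucc b a }.Finite

def IsFan : Prop := P.IsSpread ∧ P.FinBranching

def IsFann : Prop := P.IsSpraid ∧ P.FinBranching

end PreNaturalSpace
/-! ## The natural real numbers and the lean dyadic spraid σ_ℝ -/

/-- Basic dots for the natural reals: `none` is the maximal dot `(-∞,∞)`,
`some ⟨(p,q), _⟩` is the closed rational interval `[p,q]` with `p < q`. -/
def RDot : Type := Option { pq : ℚ × ℚ // pq.1 < pq.2 }

/-- Apartness of rational intervals: a positive gap. -/
def rApart : RDot → RDot → Prop
  | some a, some b => b.1.2 < a.1.1 ∨ a.1.2 < b.1.1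
  | _, _ => False

/-- Refinement of rational intervals: containment of closed intervals. -/
def rRefines : RDot → RDot → Prop
  | _, none => True
  | none, some _ => False
  | some a, some b => b.1.1 ≤ a.1.1 ∧ a.1.2 ≤ b.1.2

/-- The pre-natural space of the natural real numbers. -/
noncomputable def RPre : PreNaturalSpace RDot where
  countable' := by unfold RDot; infer_instance
  apart := rApart
  refines := rRefines
  apart_dec := Classical.decRel _
  refines_dec := Classical.decRel _
  apart_symm := by
    rintro (_ | a) (_ | b) h <;> simp [rApart] at h ⊢ <;> tauto
  apart_irrefl := by
    rintro (_ | a) h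
    · exact h
    · simp only [rApart] at h
      rcases h with h | h <;> exact absurd a.2 (not_lt.mpr h.le)
  apart_mono := by
    rintro (_ | a) (_ | b) (_ | c) hab hcb <;>
      simp [rApart, rRefines] at hab hcb ⊢
    rcases hcb with h | h
    · exact Or.inl (lt_of_le_of_lt hab.2 h)
    · exact Or.inr (lt_of_lt_of_le h hab.1)
  refines_refl := by rintro (_ | a) <;> simp [rRefines]
  refines_trans := by
    rintro (_ | a) (_ | b) (_ | c) h1 h2 <;> simp [rRefines] at h1 h2 ⊢
    exact ⟨le_trans h2.1 h1.1, le_trans h1.2 h2.2⟩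
  refines_antisymm := by
    rintro (_ | a) (_ | b) h1 h2 <;> simp [rRefines] at h1 h2 ⊢
    · rfl
    have : a.1 = b.1 := Prod.ext (le_antisymm h2.1 h1.1) (le_antisymm h1.2 h2.2)
    exact congrArg some (Subtype.ext this)

lemma dyadic_lt (n : ℤ) (m : ℕ) : (n : ℚ) / 2 ^ m < ((n : ℚ) + 2) / 2 ^ m := by
  have h2 : (0 : ℚ) < 2 ^ m := by positivity
  rw [div_lt_div_iff_of_pos_right h2]
  linarith

/-- The lean dyadic interval `[n/2^m, (n+2)/2^m]` as a dot of the natural reals. -/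
def leanIv (n : ℤ) (m : ℕ) : RDot :=
  some ⟨((n : ℚ) / 2 ^ m, ((n : ℚ) + 2) / 2 ^ m), dyadic_lt n m⟩

/-- The basic dots of `σ_ℝ` : the maximal dot together with the lean dyadic intervals. -/
def IsLeanDyadic : Set RDot := { d | d = none ∨ ∃ (n : ℤ) (m : ℕ), d = leanIv n m }

/-- The spraid `σ_ℝ` of lean dyadic intervals, with the apartness and refinement
of the natural reals. -/
noncomputable def SigPre : PreNaturalSpace IsLeanDyadic := RPre.restrict IsLeanDyadic

/-- The unique real number represented by a natural real: the supremum of the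
left endpoints of its intervals. -/
noncomputable def rhoR (x : RPre.Pt) : ℝ :=
  sSup { r : ℝ | ∃ (n : ℕ) (pq : { pq : ℚ × ℚ // pq.1 < pq.2 }),
    x.1 n = some pq ∧ r = (pq.1.1 : ℝ) }

/-- The unique real number represented by a point of `σ_ℝ`. -/
noncomputable def rhoSig (x : SigPre.Pt) : ℝ :=
  sSup { r : ℝ | ∃ (n : ℕ) (pq : { pq : ℚ × ℚ // pq.1 < pq.2 }),
    (x.1 n).1 = some pq ∧ r = (pq.1.1 : ℝ) }


/-
The intervals of a natural real `x` are nested, and the decision property applied to the lower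
and upper thirds of any of them forces a later interval of `x` to miss one of the two thirds;
so the intervals shrink geometrically and pin down a single real `ρ x`. Consequently `x # y`
iff `ρ x ≠ ρ y`, and `ρ` is injective on `ℛ/≡`. For every real `r` and rational interval with
`r` in its interior there is a point beginning with that interval, made of rational intervals
shrinking to `r` from both sides; this gives surjectivity and openness. Continuity holds
because all points beginning with a short interval of `y` have their real in that interval.
-/

namespace PreNaturalSpace

variable {V : Type} (P : PreNaturalSpace V)

lemma apart_of_refines {a a' b b' : V} (ha : P.refines a' a) (hb : P.refines b' b)
    (h : P.apart a b) : P.apart a' b' :=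
  P.apart_mono _ _ _ hb (P.apart_symm _ _ (P.apart_mono _ _ _ ha (P.apart_symm _ _ h)))

lemma pApart_of_apart {x y : P.Pt} {n m : ℕ} (h : P.apart (x.1 n) (y.1 m)) : P.pApart x y :=
  ⟨max n m, P.apart_of_refines (P.refines_of_le x.2.mono (le_max_left n m))
    (P.refines_of_le y.2.mono (le_max_right n m)) h⟩

lemma pApart_symm {x y : P.Pt} (h : P.pApart x y) : P.pApart y x :=
  let ⟨n, hn⟩ := h
  ⟨n, P.apart_symm _ _ hn⟩

end PreNaturalSpace

abbrev RatInterval : Type := { pq : ℚ × ℚ // pq.1 < pq.2 }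

lemma exists_eq_some_of_rRefines {d : RDot} {b : RatInterval} (h : rRefines d (some b)) :
    ∃ a : RatInterval, d = some a ∧ b.1.1 ≤ a.1.1 ∧ a.1.2 ≤ b.1.2 := by
  cases d with
  | none => exact h.elim
  | some a => exact ⟨a, rfl, h⟩

lemma exists_eq_some_of_rApart {d e : RDot} (h : rApart d e) :
    ∃ a b : RatInterval, d = some a ∧ e = some b ∧ (b.1.2 < a.1.1 ∨ a.1.2 < b.1.1) := by
  cases d with
  | none => exact h.elim
  | some a => cases e with
    | none => exact h.elim
    | some b => exact ⟨a, b, rfl, rfl, h⟩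

section NaturalReal

variable (x : RPre.Pt)

lemma exists_interval_dot : ∃ n, ∃ a : RatInterval, x.1 n = some a := by
  by_contra! h
  have hnone (n : ℕ) : x.1 n = none := Option.eq_none_iff_forall_ne_some.2 (h n)
  obtain ⟨m, -, hm⟩ := x.2.shrink 0
  exact hm ((hnone m).trans (hnone 0).symm)

lemma exists_nested_interval_of_le {n k : ℕ} (hnk : n ≤ k) {a : RatInterval}
    (ha : x.1 n = some a) :
    ∃ b : RatInterval, x.1 k = some b ∧ a.1.1 ≤ b.1.1 ∧ b.1.2 ≤ a.1.2 := by
  have h : rRefines (x.1 k) (x.1 n) := RPre.refines_of_le x.2.mono hnk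
  rw [ha] at h
  exact exists_eq_some_of_rRefines h

lemma interval_left_le_right {n k : ℕ} {a b : RatInterval} (ha : x.1 n = some a)
    (hb : x.1 k = some b) : a.1.1 ≤ b.1.2 := by
  rcases le_total n k with h | h
  · obtain ⟨b', hb', h₁, -⟩ := exists_nested_interval_of_le x h ha
    obtain rfl : b' = b := Option.some.inj (hb'.symm.trans hb)
    exact h₁.trans b'.2.le
  · obtain ⟨a', ha', -, h₂⟩ := exists_nested_interval_of_le x h hb
    obtain rfl : a' = a := Option.some.inj (ha'.symm.trans ha)
    exact a'.2.le.trans h₂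

lemma rhoR_mem {n : ℕ} {a : RatInterval} (ha : x.1 n = some a) :
    (a.1.1 : ℝ) ≤ rhoR x ∧ rhoR x ≤ a.1.2 := by
  have hub : (a.1.2 : ℝ) ∈ upperBounds
      { r : ℝ | ∃ (k : ℕ) (b : RatInterval), x.1 k = some b ∧ r = (b.1.1 : ℝ) } := by
    rintro _ ⟨k, b, hb, rfl⟩
    exact_mod_cast interval_left_le_right x hb ha
  exact ⟨le_csSup ⟨_, hub⟩ ⟨n, a, ha, rfl⟩, csSup_le ⟨_, n, a, ha, rfl⟩ hub⟩

lemma rhoR_mem_of_refines {n : ℕ} {b : RatInterval} (h : RPre.refines (x.1 n) (some b)) :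
    (b.1.1 : ℝ) ≤ rhoR x ∧ rhoR x ≤ b.1.2 := by
  obtain ⟨a, ha, h₁, h₂⟩ := exists_eq_some_of_rRefines h
  have hx := rhoR_mem x ha
  exact ⟨(Rat.cast_le.2 h₁).trans hx.1, hx.2.trans (Rat.cast_le.2 h₂)⟩

lemma exists_width_le_two_thirds {n : ℕ} {a : RatInterval} (ha : x.1 n = some a) :
    ∃ k, ∃ b : RatInterval, x.1 k = some b ∧ b.1.2 - b.1.1 ≤ 2 / 3 * (a.1.2 - a.1.1) := by
  obtain ⟨⟨p, q⟩, hpq⟩ := a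
  dsimp only at hpq ⊢
  have hlow : p < p + (q - p) / 3 := by linarith
  have hhigh : p + 2 * (q - p) / 3 < q := by linarith
  let lowerThird : RDot := some ⟨(p, p + (q - p) / 3), hlow⟩
  let upperThird : RDot := some ⟨(p + 2 * (q - p) / 3, q), hhigh⟩
  have hapart : RPre.apart lowerThird upperThird := Or.inr (by dsimp only; linarith)
  obtain ⟨m, hm⟩ := x.2.decides lowerThird upperThird hapart
  obtain ⟨b, hb, hpb, hbq⟩ := exists_nested_interval_of_le x (le_max_right m n) ha
  refine ⟨max m n, b, hb, ?_⟩
  have hrefines := RPre.refines_of_le x.2.mono (le_max_left m n)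
  have hb' := b.2
  rcases hm with hm | hm <;>
  · have h := RPre.apart_of_refines hrefines (RPre.refines_refl _) hm
    change rApart (x.1 (max m n)) _ at h
    rw [hb] at h
    rcases h with h | h <;> (dsimp only at h hpb hbq; linarith)

lemma exists_width_lt {ε : ℚ} (hε : 0 < ε) :
    ∃ n, ∃ a : RatInterval, x.1 n = some a ∧ a.1.2 - a.1.1 < ε := by
  obtain ⟨n₀, a₀, ha₀⟩ := exists_interval_dot x
  have hw₀ : 0 < a₀.1.2 - a₀.1.1 := sub_pos.2 a₀.2
  have hgeom : ∀ j : ℕ, ∃ n, ∃ a : RatInterval, x.1 n = some a ∧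
      a.1.2 - a.1.1 ≤ (2 / 3) ^ j * (a₀.1.2 - a₀.1.1) := by
    intro j
    induction j with
    | zero => exact ⟨n₀, a₀, ha₀, by simp⟩
    | succ j ih =>
      obtain ⟨n, a, ha, hw⟩ := ih
      obtain ⟨k, b, hb, hwb⟩ := exists_width_le_two_thirds x ha
      refine ⟨k, b, hb, hwb.trans ?_⟩
      rw [pow_succ, mul_comm _ (2 / 3 : ℚ), mul_assoc]
      gcongr
  obtain ⟨j, hj⟩ := exists_pow_lt_of_lt_one (div_pos hε hw₀) (by norm_num : (2 / 3 : ℚ) < 1)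
  obtain ⟨n, a, ha, hw⟩ := hgeom j
  exact ⟨n, a, ha, hw.trans_lt ((lt_div_iff₀ hw₀).1 hj)⟩

variable {x}

lemma pApart_of_rhoR_lt {y : RPre.Pt} (h : rhoR x < rhoR y) : RPre.pApart x y := by
  obtain ⟨ε, hε, hεxy⟩ := exists_rat_btwn (half_pos (sub_pos.2 h))
  obtain ⟨n, a, ha, hwa⟩ := exists_width_lt x (Rat.cast_pos.1 hε)
  obtain ⟨m, b, hb, hwb⟩ := exists_width_lt y (Rat.cast_pos.1 hε)
  have hxa := rhoR_mem x ha
  have hyb := rhoR_mem y hb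
  have hwa' : (a.1.2 : ℝ) - a.1.1 < ε := by exact_mod_cast hwa
  have hwb' : (b.1.2 : ℝ) - b.1.1 < ε := by exact_mod_cast hwb
  have hab : (a.1.2 : ℝ) < b.1.1 := by linarith
  refine RPre.pApart_of_apart (n := n) (m := m) ?_
  change rApart (x.1 n) (y.1 m)
  rw [ha, hb]
  exact Or.inr (by exact_mod_cast hab)

lemma rhoR_ne_of_pApart {y : RPre.Pt} (h : RPre.pApart x y) : rhoR x ≠ rhoR y := by
  obtain ⟨n, hn⟩ := h
  obtain ⟨a, b, ha, hb, hab⟩ := exists_eq_some_of_rApart hn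
  have hxa := rhoR_mem x ha
  have hyb := rhoR_mem y hb
  rcases hab with hab | hab
  · have : (b.1.2 : ℝ) < a.1.1 := by exact_mod_cast hab
    exact (by linarith : rhoR y < rhoR x).ne'
  · have : (a.1.2 : ℝ) < b.1.1 := by exact_mod_cast hab
    exact (by linarith : rhoR x < rhoR y).ne

lemma pApart_iff_rhoR_ne {y : RPre.Pt} : RPre.pApart x y ↔ rhoR x ≠ rhoR y :=
  ⟨rhoR_ne_of_pApart, fun h => h.lt_or_gt.elim pApart_of_rhoR_lt
    fun h => RPre.pApart_symm (pApart_of_rhoR_lt h)⟩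

lemma pEquiv_iff_rhoR_eq {y : RPre.Pt} : RPre.pEquiv x y ↔ rhoR x = rhoR y :=
  (not_congr pApart_iff_rhoR_ne).trans not_not

end NaturalReal

lemma exists_ratInterval_mem (r : ℝ) : ∃ c : RatInterval, (c.1.1 : ℝ) < r ∧ r < c.1.2 := by
  obtain ⟨A, hA⟩ := exists_rat_lt r
  obtain ⟨B, hB⟩ := exists_rat_gt r
  exact ⟨⟨(A, B), Rat.cast_lt.1 (hA.trans hB)⟩, hA, hB⟩

lemma exists_pt_rhoR_eq {r : ℝ} (c : RatInterval) (hc₁ : (c.1.1 : ℝ) < r) (hc₂ : r < c.1.2) :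
    ∃ z : RPre.Pt, rhoR z = r ∧ RPre.begins z.1 (some c) ∧
      ∀ n, ∃ a : RatInterval, z.1 n = some a ∧ (a.1.1 : ℝ) < r ∧ r < a.1.2 := by
  obtain ⟨u, hu_mono, hu_mem, hu_lim⟩ :=
    Rat.denseRange_cast.exists_seq_strictMono_tendsto_of_lt Rat.cast_strictMono.monotone hc₁
  obtain ⟨v, hv_anti, hv_mem, hv_lim⟩ :=
    Rat.denseRange_cast.exists_seq_strictAnti_tendsto_of_lt Rat.cast_strictMono.monotone hc₂
  have huv (n : ℕ) : u n < v n := Rat.cast_lt.1 ((hu_mem n).2.trans (hv_mem n).1)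
  let z : ℕ → RDot := fun n => some ⟨(u n, v n), huv n⟩
  have below (b : RatInterval) (hb : (b.1.2 : ℝ) < r) : ∃ m, rApart (z m) (some b) :=
    ((hu_lim.eventually (lt_mem_nhds hb)).exists).imp fun _ hm => Or.inl (Rat.cast_lt.1 hm)
  have above (b : RatInterval) (hb : r < b.1.1) : ∃ m, rApart (z m) (some b) :=
    ((hv_lim.eventually (gt_mem_nhds hb)).exists).imp fun _ hm => Or.inr (Rat.cast_lt.1 hm)
  have hz : RPre.IsPoint z := by
    refine ⟨fun n => ⟨(hu_mono n.lt_succ_self).le, (hv_anti n.lt_succ_self).le⟩,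
      fun n => ⟨n + 1, ⟨(hu_mono n.lt_succ_self).le, (hv_anti n.lt_succ_self).le⟩, ?_⟩, ?_⟩
    · intro h
      exact (hu_mono n.lt_succ_self).ne' (congrArg (·.1.1) (Option.some.inj h))
    · intro d e hde
      obtain ⟨a, b, rfl, rfl, hab⟩ := exists_eq_some_of_rApart hde
      rcases hab with hab | hab
      · rcases lt_or_ge r a.1.1 with h | h
        · exact (above a h).imp fun _ => Or.inl
        · exact (below b ((Rat.cast_lt.2 hab).trans_le h)).imp fun _ => Or.inr
      · rcases lt_or_ge r b.1.1 with h | h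
        · exact (above b h).imp fun _ => Or.inr
        · exact (below a ((Rat.cast_lt.2 hab).trans_le h)).imp fun _ => Or.inl
  have hmem (n : ℕ) := rhoR_mem ⟨z, hz⟩ (n := n) rfl
  refine ⟨⟨z, hz⟩, le_antisymm (ge_of_tendsto' hv_lim fun n => (hmem n).2)
    (le_of_tendsto' hu_lim fun n => (hmem n).1), ⟨0, ⟨?_, ?_⟩, ?_⟩,
    fun n => ⟨_, rfl, (hu_mem n).2, (hv_mem n).1⟩⟩
  · exact Rat.cast_lt.1 (hu_mem 0).1 |>.le
  · exact Rat.cast_lt.1 (hv_mem 0).2 |>.le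
  · intro h
    exact (Rat.cast_lt.1 (hu_mem 0).1).ne' (congrArg (·.1.1) (Option.some.inj h))

lemma continuous_rhoR : Continuous rhoR := by
  refine continuous_def.2 fun U hU => ?_
  change RPre.NatOpen _
  intro x hx y
  rcases eq_or_ne (rhoR y) (rhoR x) with hxy | hxy
  · obtain ⟨ε, hε, hball⟩ := Metric.isOpen_iff.1 hU _ hx
    obtain ⟨δ, hδ, hδε⟩ := exists_rat_btwn hε
    obtain ⟨m, b, hb, hwb⟩ := exists_width_lt y (Rat.cast_pos.1 hδ)
    refine Or.inr ⟨m, fun w ⟨j, hj, _⟩ => hball ?_⟩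
    rw [hb] at hj
    have hw := rhoR_mem_of_refines w hj
    have hy := rhoR_mem y hb
    have hwb' : (b.1.2 : ℝ) - b.1.1 < δ := by exact_mod_cast hwb
    rw [Metric.mem_ball, Real.dist_eq, abs_lt, ← hxy]
    constructor <;> linarith
  · exact Or.inl (pApart_iff_rhoR_ne.2 hxy)

noncomputable def rhoQuot : Quotient RPre.ptSetoid → ℝ :=
  Quotient.lift rhoR fun _ _ h => pEquiv_iff_rhoR_eq.1 h

lemma isOpenMap_rhoQuot : IsOpenMap rhoQuot := by
  intro U hU
  have hV : RPre.NatOpen (Quotient.mk _ ⁻¹' U) := hU.preimage continuous_quotient_mk'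
  refine Metric.isOpen_iff.2 ?_
  rintro _ ⟨⟨x⟩, hxU, rfl⟩
  change ∃ ε > 0, Metric.ball (rhoR x) ε ⊆ rhoQuot '' U
  -- `ρ x` may be an endpoint of every interval of `x`, so pass to an equivalent point `y`
  -- whose intervals all contain `ρ x` in their interior.
  obtain ⟨c, hc₁, hc₂⟩ := exists_ratInterval_mem (rhoR x)
  obtain ⟨y, hyx, -, hy_int⟩ := exists_pt_rhoR_eq c hc₁ hc₂
  have hyU : y ∈ Quotient.mk _ ⁻¹' U := by
    rwa [Set.mem_preimage, Quotient.sound (pEquiv_iff_rhoR_eq.2 hyx)]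
  obtain ⟨m, hm⟩ := (hV y hyU y).resolve_left (RPre.pEquiv_refl y)
  obtain ⟨b, hb, hb₁, hb₂⟩ := hy_int m
  refine ⟨min (rhoR x - b.1.1) (b.1.2 - rhoR x), lt_min (by linarith) (by linarith),
    fun s hs => ?_⟩
  rw [Metric.mem_ball, Real.dist_eq, abs_lt] at hs
  have := min_le_left (rhoR x - b.1.1) (b.1.2 - rhoR x)
  have := min_le_right (rhoR x - b.1.1) (b.1.2 - rhoR x)
  obtain ⟨w, hws, hw_begins, -⟩ :=
    exists_pt_rhoR_eq b (by linarith [hs.1]) (by linarith [hs.2])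
  exact ⟨Quotient.mk _ w, hm (hb ▸ hw_begins), hws⟩

/-- `ρ` sends each natural real into all of its intervals
(it is the unique real number represented), and it induces a homeomorphism
from `ℛ/≡` (with the quotient of the natural topology) onto `ℝ`. -/
theorem stmt2 :
    (∀ (x : RPre.Pt) (n : ℕ) (pq : { pq : ℚ × ℚ // pq.1 < pq.2 }), x.1 n = some pq →
      (pq.1.1 : ℝ) ≤ rhoR x ∧ rhoR x ≤ (pq.1.2 : ℝ)) ∧
    ∃ h : Quotient RPre.ptSetoid ≃ₜ ℝ,
      ∀ x : RPre.Pt, h (Quotient.mk RPre.ptSetoid x) = rhoR x := by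
  refine ⟨fun x _ _ => rhoR_mem x, ?_⟩
  have hinj : Function.Injective rhoQuot := by
    rintro ⟨x⟩ ⟨y⟩ h
    exact Quotient.sound (pEquiv_iff_rhoR_eq.2 h)
  have hsurj : Function.Surjective rhoQuot := fun r => by
    obtain ⟨c, hc₁, hc₂⟩ := exists_ratInterval_mem r
    obtain ⟨z, hz, -⟩ := exists_pt_rhoR_eq c hc₁ hc₂
    exact ⟨Quotient.mk _ z, hz⟩
  exact ⟨(Equiv.ofBijective _ ⟨hinj, hsurj⟩).toHomeomorphOfContinuousOpen
    (continuous_rhoR.quotient_lift _) isOpenMap_rhoQuot, fun _ => rfl⟩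
end

section
/- Let f be a trail morphism from a natural space 𝒱 to a natural space 𝒲. Then the induced map sending a point p of 𝒱 to the point f(p) := f(p♯(0)),f(p♯(1)),… of 𝒲 is continuous with respect to the natural topologies. -/
/-!
Points of `𝒱` are turned into points of the trail space by `p ↦ p♯`, so the induced map `g`
reflects apartness, and `(g p)ₙ = f (p♯(n))` depends only on `p₀, …, p_{n-1}`. Let `U` be open,
`g x ∈ U` and `y` a point. Either `g y # g x`, whence `y # x`, or `U` contains every point beginning
with `(g y)ₘ`. In the latter case any `z` beginning with `yₘ` is `≡` to the point `z'` that follows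
`y` up to index `m` and then a tail of `z`; then `(g z')ₘ = (g y)ₘ`, so `g z' ∈ U`, and `g z ≡ g z'`
gives `g z ∈ U` because open sets are closed under `≡`.
-/

namespace PreNaturalSpace

variable {V W : Type}

section segList

variable (p : ℕ → V)

lemma segList_zero : segList p 0 = [] := by rw [segList]

open Classical in
lemma segList_succ (n : ℕ) :
    segList p (n + 1) = if (segList p n).getLast? = some (p n) then segList p n
      else segList p n ++ [p n] := by
  rw [segList]

lemma getLast?_segList_succ (n : ℕ) : (segList p (n + 1)).getLast? = some (p n) := by
  rw [segList_succ]
  split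
  · assumption
  · exact List.getLast?_concat

lemma segList_prefix_succ (n : ℕ) : segList p n <+: segList p (n + 1) := by
  rw [segList_succ]
  split
  · exact List.prefix_refl _
  · exact List.prefix_append _ _

lemma segList_prefix_of_le {n k : ℕ} (h : n ≤ k) : segList p n <+: segList p k := by
  induction h with
  | refl => exact List.prefix_refl _
  | step _ ih => exact ih.trans (segList_prefix_succ p _)

lemma segList_congr {q : ℕ → V} {n : ℕ} (h : ∀ j < n, p j = q j) :
    segList p n = segList q n := by
  induction n with
  | zero => rfl
  | succ n ih =>
    rw [segList_succ, segList_succ, ih fun j hj => h j (by omega), h n (by omega)]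

end segList

variable (P : PreNaturalSpace V)

lemma strict_of_strict_of_refines {a b c : V} (hab : P.strict a b) (hbc : P.refines b c) :
    P.strict a c :=
  ⟨P.refines_trans _ _ _ hab.1 hbc, fun hac =>
    hab.2 (P.refines_antisymm _ _ hab.1 (hac ▸ hbc))⟩

lemma apart_of_refines_left {a b c : V} (hab : P.refines a b) (hbc : P.apart b c) :
    P.apart a c :=
  P.apart_symm _ _ (P.apart_mono _ _ _ hab (P.apart_symm _ _ hbc))

lemma not_apart_of_refines {a b c : V} (hca : P.refines c a) (hcb : P.refines c b) :
    ¬ P.apart a b := fun hab =>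
  P.apart_irrefl c (P.apart_of_refines_left hca (P.apart_symm _ _
    (P.apart_of_refines_left hcb (P.apart_symm _ _ hab))))

lemma lt_of_strict {p : ℕ → V} (hp : P.IsPoint p) {i j : ℕ} (h : P.strict (p i) (p j)) :
    j < i := by
  by_contra! hij
  exact h.2 (P.refines_antisymm _ _ h.1 (P.refines_of_le hp.mono hij))

section trail

variable {P}

lemma isChain_segList {p : ℕ → V} (hp : P.IsPoint p) (n : ℕ) :
    (segList p n).IsChain fun a b => P.strict b a := by
  induction n with
  | zero => rw [segList_zero]; exact List.isChain_nil
  | succ n ih =>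
    rw [segList_succ]
    split
    · exact ih
    · rename_i hlast
      refine List.isChain_append.mpr ⟨ih, List.isChain_singleton _, fun x hx y hy => ?_⟩
      rw [List.head?_cons, Option.mem_some_iff] at hy
      subst hy
      cases n with
      | zero => simp [segList_zero] at hx
      | succ k =>
        rw [Option.mem_def, getLast?_segList_succ, Option.some_inj] at hx
        subst hx
        exact ⟨hp.mono _, fun he => hlast (by rw [getLast?_segList_succ, he])⟩

/-- The trail sequence `p♯(0), p♯(1), …` of a point `p`. -/
noncomputable def trailPt {p : ℕ → V} (hp : P.IsPoint p) : ℕ → P.Trail :=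
  fun n => ⟨segList p n, isChain_segList hp n⟩

lemma trailPt_isPoint {p : ℕ → V} (hp : P.IsPoint p) : P.trailSpace.IsPoint (trailPt hp) where
  mono n := segList_prefix_succ p n
  shrink n := by
    obtain ⟨i, hi⟩ := hp.shrink (n - 1)
    have hlt := P.lt_of_strict hp hi
    refine ⟨i + 1, segList_prefix_of_le p (by omega), fun he => ?_⟩
    have hlast := congrArg (fun t : P.Trail => t.1.getLast?) he
    cases n with
    | zero => simp [trailPt, segList_zero, getLast?_segList_succ] at hlast
    | succ j => exact hi.2 (by simpa [trailPt, getLast?_segList_succ] using hlast)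
  decides a b := by
    rintro ⟨x, hx, y, hy, hxy⟩
    obtain ⟨m, hm⟩ := hp.decides x y hxy
    have hlast : p m ∈ (segList p (m + 1)).getLast? := getLast?_segList_succ p m
    exact ⟨m + 1, hm.imp (fun h => ⟨_, hlast, x, hx, h⟩) (fun h => ⟨_, hlast, y, hy, h⟩)⟩

lemma apart_of_trailSpace_apart_segList {p q : ℕ → V} {a b : P.Trail} {n : ℕ}
    (ha : a.1 = segList p n) (hb : b.1 = segList q n) (h : P.trailSpace.apart a b) :
    ∃ j, P.apart (p j) (q j) := by
  obtain ⟨x, hx, y, hy, hxy⟩ := h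
  rw [ha] at hx
  rw [hb] at hy
  cases n with
  | zero => simp [segList_zero] at hx
  | succ j =>
    rw [Option.mem_def, getLast?_segList_succ, Option.some_inj] at hx hy
    exact ⟨j, hx ▸ hy ▸ hxy⟩

end trail

lemma exists_inducedByTrailMorphism (Q : PreNaturalSpace W) (f : RefMorphism P.trailSpace Q) :
    ∃ g : P.Pt → Q.Pt, P.InducedByTrailMorphism Q f g :=
  ⟨fun p => f.pointMap ⟨trailPt p.2, trailPt_isPoint p.2⟩,
    fun p => ⟨⟨trailPt p.2, trailPt_isPoint p.2⟩, fun _ => rfl, rfl⟩⟩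

namespace InducedByTrailMorphism

variable {P} {Q : PreNaturalSpace W} {f : RefMorphism P.trailSpace Q} {g : P.Pt → Q.Pt}

lemma pApart_of_pApart (hg : P.InducedByTrailMorphism Q f g) {p q : P.Pt}
    (h : Q.pApart (g p) (g q)) : P.pApart p q := by
  obtain ⟨tp, htp, hgp⟩ := hg p
  obtain ⟨tq, htq, hgq⟩ := hg q
  rw [hgp, hgq] at h
  obtain ⟨n, hn⟩ := f.reflects_apart tp.1 tq.1 tp.2 tq.2 h
  exact apart_of_trailSpace_apart_segList (htp n) (htq n) hn

lemma apply_eq_of_eqOn (hg : P.InducedByTrailMorphism Q f g) {p q : P.Pt} {n : ℕ}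
    (h : ∀ j < n, p.1 j = q.1 j) : (g p).1 n = (g q).1 n := by
  obtain ⟨tp, htp, hgp⟩ := hg p
  obtain ⟨tq, htq, hgq⟩ := hg q
  rw [hgp, hgq]
  exact congrArg f.toFun (Subtype.ext (by rw [htp, htq, segList_congr _ h]))

end InducedByTrailMorphism

lemma NatOpen.mem_of_pEquiv {P : PreNaturalSpace V} {U : Set P.Pt} (hU : P.NatOpen U) {x y : P.Pt} (hx : x ∈ U)
    (h : P.pEquiv y x) : y ∈ U :=
  (hU x hx y).resolve_left h |>.elim fun m hm => hm (y.2.shrink m)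

section splice

def splice (y z : ℕ → V) (m k : ℕ) : ℕ → V :=
  fun n => if n < m then y n else z (k + (n - m))

variable {P} {y z s : ℕ → V} {m k : ℕ}

lemma splice_of_lt {n : ℕ} (h : n < m) : splice y z m k n = y n := if_pos h

lemma splice_add (i : ℕ) : splice y z m k (m + i) = z (k + i) := by
  simp [splice]

lemma splice_mono (hy : ∀ n, P.refines (y (n + 1)) (y n))
    (hz : ∀ n, P.refines (z (n + 1)) (z n)) (hk : P.refines (z k) (y m)) (n : ℕ) :
    P.refines (splice y z m k (n + 1)) (splice y z m k n) := by
  unfold splice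
  split_ifs with h1 h2 h2
  · exact hy n
  · omega
  · rw [show k + (n + 1 - m) = k by omega]
    exact P.refines_trans _ _ _ hk (P.refines_of_le hy (by omega))
  · rw [show k + (n + 1 - m) = k + (n - m) + 1 by omega]
    exact hz _

lemma isPoint_of_tail_eq (hs : ∀ n, P.refines (s (n + 1)) (s n)) (hz : P.IsPoint z)
    (htail : ∀ i, s (m + i) = z (k + i)) : P.IsPoint s where
  mono := hs
  shrink n := by
    obtain ⟨i, hi⟩ := hz.shrink (k + n)
    have hlt := P.lt_of_strict hz hi
    refine ⟨m + (i - k), ?_⟩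
    rw [htail, show k + (i - k) = i by omega]
    exact P.strict_of_strict_of_refines hi
      (htail n ▸ P.refines_of_le hs (Nat.le_add_left n m))
  decides a b hab := by
    obtain ⟨i, hi⟩ := hz.decides a b hab
    have hle : P.refines (s (m + i)) (z i) :=
      htail i ▸ P.refines_of_le hz.mono (Nat.le_add_left i k)
    exact ⟨m + i, hi.imp (P.apart_of_refines_left hle) (P.apart_of_refines_left hle)⟩

lemma not_apart_of_tail_eq (hs : ∀ n, P.refines (s (n + 1)) (s n))
    (hz : ∀ n, P.refines (z (n + 1)) (z n)) (htail : ∀ i, s (m + i) = z (k + i)) (n : ℕ) :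
    ¬ P.apart (s n) (z n) :=
  P.not_apart_of_refines (htail n ▸ P.refines_of_le hs (Nat.le_add_left n m))
    (P.refines_of_le hz (Nat.le_add_left n k))

end splice

lemma exists_pEquiv_eqOn_of_begins (y z : P.Pt) {m : ℕ} (hz : P.begins z.1 (y.1 m)) :
    ∃ z' : P.Pt, (∀ j < m, z'.1 j = y.1 j) ∧ P.pEquiv z z' := by
  obtain ⟨k, hk⟩ := hz
  have hmono := splice_mono y.2.mono z.2.mono hk.1
  refine ⟨⟨splice y.1 z.1 m k, isPoint_of_tail_eq hmono z.2 splice_add⟩,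
    fun j hj => splice_of_lt hj, ?_⟩
  rintro ⟨n, hn⟩
  exact not_apart_of_tail_eq hmono z.2.mono splice_add n (P.apart_symm _ _ hn)

theorem InducedByTrailMorphism.continuous {Q : PreNaturalSpace W}
    {f : RefMorphism P.trailSpace Q} {g : P.Pt → Q.Pt} (hg : P.InducedByTrailMorphism Q f g) :
    Continuous g := by
  refine continuous_def.mpr fun U (hU : Q.NatOpen U) x hx y => ?_
  rcases hU (g x) hx (g y) with hyx | ⟨m, hm⟩
  · exact Or.inl (hg.pApart_of_pApart hyx)
  refine Or.inr ⟨m, fun z hz => ?_⟩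
  obtain ⟨z', hz'y, hzz'⟩ := P.exists_pEquiv_eqOn_of_begins y z hz
  have hz'U : g z' ∈ U := hm (hg.apply_eq_of_eqOn hz'y ▸ (g z').2.shrink m)
  exact hU.mem_of_pEquiv hz'U fun h => hzz' (hg.pApart_of_pApart h)

end PreNaturalSpace

theorem stmt5_general {V W : Type} (P : PreNaturalSpace V) (Q : PreNaturalSpace W)
    (f : RefMorphism P.trailSpace Q) :
    (∃ g : P.Pt → Q.Pt, P.InducedByTrailMorphism Q f g) ∧
    ∀ g : P.Pt → Q.Pt, P.InducedByTrailMorphism Q f g → Continuous g :=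
  ⟨P.exists_inducedByTrailMorphism Q f, fun _ hg => hg.continuous⟩

/-- the point map induced by a trail morphism (sending a point `p` to
`f(p♯(0)), f(p♯(1)), …`) exists and is continuous for the natural topologies. -/
theorem stmt5 {V W : Type} (P : PreNaturalSpace V) (Q : PreNaturalSpace W)
    (hP : P.IsNaturalSpace) (hQ : Q.IsNaturalSpace) (f : RefMorphism P.trailSpace Q) :
    (∃ g : P.Pt → Q.Pt, P.InducedByTrailMorphism Q f g) ∧
    ∀ g : P.Pt → Q.Pt, P.InducedByTrailMorphism Q f g → Continuous g :=
  stmt5_general P Q f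
end
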